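/- Let σ ∈ ℝⁿ be nonzero and c ∈ ℝ. Then the matrix ΔG* = (2c/‖σ‖₂⁴)·σσᵀ is symmetric and satisfies (1/2)·σᵀ(ΔG*)σ = c. Moreover, ΔG* minimizes the Frobenius norm ‖H‖_F over all symmetric matrices H with (1/2)σᵀHσ = c. -/

import Mathlib

open Matrix BigOperators

noncomputable def eNorm {n : ℕ} (x : Fin n → ℝ) : ℝ := Real.sqrt (∑ i, x i ^ 2)

noncomputable def frobNorm {n : ℕ} (A : Matrix (Fin n) (Fin n) ℝ) : ℝ :=
  Real.sqrt (∑ i, ∑ j, A i j ^ 2)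

/-!
The quadratic form `σᵀ H σ` is the Frobenius inner product of `H` with `σσᵀ`, so by
Cauchy–Schwarz every `H` with `σᵀ H σ = 2c` has `‖H‖_F ≥ 2|c| / ‖σσᵀ‖_F = 2|c| / ‖σ‖₂²`.
The multiple of `σσᵀ` meeting the constraint attains this bound.
-/

section Bilinear

variable {m n : Type*} [Fintype m] [Fintype n]

lemma dotProduct_mulVec_eq_sum_mul_vecMulVec (u : m → ℝ) (A : Matrix m n ℝ) (v : n → ℝ) :
    u ⬝ᵥ A *ᵥ v = ∑ i, ∑ j, A i j * vecMulVec u v i j := by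
  simp only [dotProduct, mulVec, vecMulVec_apply, Finset.mul_sum]
  exact Finset.sum_congr rfl fun i _ => Finset.sum_congr rfl fun j _ => by ring

lemma dotProduct_vecMulVec_mulVec (u x : m → ℝ) (y v : n → ℝ) :
    u ⬝ᵥ vecMulVec x y *ᵥ v = (u ⬝ᵥ x) * (y ⬝ᵥ v) := by
  rw [vecMulVec_mulVec, op_smul_eq_smul, dotProduct_smul, smul_eq_mul, mul_comm]

lemma sum_sq_vecMulVec (u : m → ℝ) (v : n → ℝ) :
    ∑ i, ∑ j, vecMulVec u v i j ^ 2 = (u ⬝ᵥ u) * (v ⬝ᵥ v) := by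
  simp only [dotProduct, vecMulVec_apply, Finset.sum_mul_sum]
  exact Finset.sum_congr rfl fun i _ => Finset.sum_congr rfl fun j _ => by ring

lemma sq_dotProduct_mulVec_le (u : m → ℝ) (A : Matrix m n ℝ) (v : n → ℝ) :
    (u ⬝ᵥ A *ᵥ v) ^ 2 ≤ (∑ i, ∑ j, A i j ^ 2) * ((u ⬝ᵥ u) * (v ⬝ᵥ v)) := by
  have h := Finset.sum_mul_sq_le_sq_mul_sq Finset.univ
    (fun p : m × n => A p.1 p.2) (fun p => vecMulVec u v p.1 p.2)
  simp only [Fintype.sum_prod_type] at h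
  rwa [dotProduct_mulVec_eq_sum_mul_vecMulVec, ← sum_sq_vecMulVec]

/-- The left-hand matrix is the multiple of `u vᵀ` with the same value of `uᵀ · v` as `A`
(it is `0`, by division by zero, when `u = 0` or `v = 0`). -/
lemma sum_sq_smul_vecMulVec_le (u : m → ℝ) (A : Matrix m n ℝ) (v : n → ℝ) :
    ∑ i, ∑ j, (((u ⬝ᵥ A *ᵥ v) / ((u ⬝ᵥ u) * (v ⬝ᵥ v))) • vecMulVec u v) i j ^ 2 ≤
      ∑ i, ∑ j, A i j ^ 2 := by
  have hP : 0 ≤ (u ⬝ᵥ u) * (v ⬝ᵥ v) :=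
    mul_nonneg (dotProduct_self_star_nonneg u) (dotProduct_self_star_nonneg v)
  have hlhs : ∑ i, ∑ j, (((u ⬝ᵥ A *ᵥ v) / ((u ⬝ᵥ u) * (v ⬝ᵥ v))) • vecMulVec u v) i j ^ 2 =
      (u ⬝ᵥ A *ᵥ v) ^ 2 / ((u ⬝ᵥ u) * (v ⬝ᵥ v)) := by
    simp only [Matrix.smul_apply, smul_eq_mul, mul_pow, ← Finset.mul_sum, sum_sq_vecMulVec]
    rcases hP.eq_or_lt with h | h
    · simp [← h]
    · field_simp
  rw [hlhs]
  exact div_le_of_le_mul₀ hP (Finset.sum_nonneg fun i _ => Finset.sum_nonneg fun j _ =>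
    sq_nonneg _) (sq_dotProduct_mulVec_le u A v)

end Bilinear

lemma eNorm_sq {n : ℕ} (x : Fin n → ℝ) : eNorm x ^ 2 = x ⬝ᵥ x := by
  rw [eNorm, Real.sq_sqrt (Finset.sum_nonneg fun i _ => sq_nonneg (x i))]
  simp only [dotProduct, sq]

lemma frobNorm_smul_vecMulVec_le {n : ℕ} (u v : Fin n → ℝ) (A : Matrix (Fin n) (Fin n) ℝ) :
    frobNorm (((u ⬝ᵥ A *ᵥ v) / ((u ⬝ᵥ u) * (v ⬝ᵥ v))) • vecMulVec u v) ≤ frobNorm A :=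
  Real.sqrt_le_sqrt (sum_sq_smul_vecMulVec_le u A v)

theorem stmt5 {n : ℕ} (σ : Fin n → ℝ) (hσ : σ ≠ 0) (c : ℝ) :
    let ΔG : Matrix (Fin n) (Fin n) ℝ := (2 * c / eNorm σ ^ 4) • vecMulVec σ σ
    ΔG.IsSymm ∧
    (1 / 2) * (σ ⬝ᵥ ΔG.mulVec σ) = c ∧
    (∀ H : Matrix (Fin n) (Fin n) ℝ, H.IsSymm → (1 / 2) * (σ ⬝ᵥ H.mulVec σ) = c →
      frobNorm ΔG ≤ frobNorm H) := by
  intro ΔG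
  have hs : σ ⬝ᵥ σ ≠ 0 := fun h => hσ (dotProduct_self_eq_zero.mp h)
  have hΔG : ΔG = (2 * c / ((σ ⬝ᵥ σ) * (σ ⬝ᵥ σ))) • vecMulVec σ σ := by
    simp only [ΔG]
    rw [show eNorm σ ^ 4 = (eNorm σ ^ 2) ^ 2 by ring, eNorm_sq, sq]
  have hq : σ ⬝ᵥ ΔG *ᵥ σ = 2 * c := by
    rw [hΔG, smul_mulVec, dotProduct_smul, dotProduct_vecMulVec_mulVec, smul_eq_mul]
    field_simp
  refine ⟨IsSymm.smul (transpose_vecMulVec σ σ) _, by rw [hq]; ring, fun H _ hH => ?_⟩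
  rw [hΔG, show 2 * c = σ ⬝ᵥ H *ᵥ σ by linarith]
  exact frobNorm_smul_vecMulVec_le σ σ H
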